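/- arXiv:1403.7226 — 3 statements merged into one kernel-verified Lean document; each statement's English description precedes it below -/
import Mathlib

section
/- Let D be a linear differential operator of order at most ℓ on smooth functions on ℝ^n, i.e. Df = Σ_{|α|≤ℓ} c_α ∂^α f with smooth coefficient functions c_α : ℝ^n → ℝ indexed by multi-indices α, and let V^{a₁…a_ℓ} be its principal symbol, i.e. the totally symmetric smooth tensor field collecting the order-ℓ coefficients (V^{a₁…a_ℓ} is the coefficient of ∂_{a₁}⋯∂_{a_ℓ}, symmetrized). If Δ∘D = D∘Δ as operators on smooth functions, then V is a Killing ℓ-tensor. -/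
noncomputable section

/-- Partial derivative `∂_a f` in the `a`-th coordinate direction on `ℝⁿ`. -/
def pd {n : ℕ} (a : Fin n) (f : (Fin n → ℝ) → ℝ) : (Fin n → ℝ) → ℝ :=
  fun x => fderiv ℝ f x (Pi.single a 1)

/-- Raised partial derivative `∂^a f = g^{ab} ∂_b f`. -/
def pdUp {n : ℕ} (ginv : Matrix (Fin n) (Fin n) ℝ) (a : Fin n)
    (f : (Fin n → ℝ) → ℝ) : (Fin n → ℝ) → ℝ :=
  fun x => ∑ b, ginv a b * pd b f x

/-- Laplace operator `Δ f = g^{ab} ∂_a ∂_b f`. -/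
def lap {n : ℕ} (ginv : Matrix (Fin n) (Fin n) ℝ) (f : (Fin n → ℝ) → ℝ) :
    (Fin n → ℝ) → ℝ :=
  fun x => ∑ a, ∑ b, ginv a b * pd a (pd b f) x

/-- Iterated partial derivative `∂_{i 0} ⋯ ∂_{i (m-1)} f` along a tuple of indices. -/
def pdIter {n : ℕ} : (m : ℕ) → (Fin m → Fin n) → ((Fin n → ℝ) → ℝ) → ((Fin n → ℝ) → ℝ)
  | 0, _, f => f
  | m + 1, i, f => pd (i 0) (pdIter m (fun j => i j.succ) f)

/-- A (smooth, totally symmetric) Killing `ℓ`-tensor: `∂^{(a₀} k^{a₁…a_ℓ)} = 0`. -/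
def IsKillingTensor {n : ℕ} (ginv : Matrix (Fin n) (Fin n) ℝ) (ℓ : ℕ)
    (k : (Fin ℓ → Fin n) → (Fin n → ℝ) → ℝ) : Prop :=
  (∀ i, ContDiff ℝ (⊤ : ℕ∞) (k i)) ∧
  (∀ (σ : Equiv.Perm (Fin ℓ)) (i : Fin ℓ → Fin n), k (i ∘ σ) = k i) ∧
  (∀ (i : Fin (ℓ + 1) → Fin n) (x : Fin n → ℝ),
    ∑ σ : Equiv.Perm (Fin (ℓ + 1)),
      pdUp ginv (i (σ 0)) (k (fun j => i (σ j.succ))) x = 0)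

end

/-!
Test the commutation relation on the monomial `f = ∏ₖ (x_{iₖ} - x₀_{iₖ})` of degree `ℓ + 1`
built from an index tuple `i`. For symmetric `g⁻¹`,
`Δ (c ∂_J f) - c ∂_J (Δ f) = (Δ c) ∂_J f + 2 ∂^a c ∂_a ∂_J f`. At `x₀` every derivative of `f`
of order at most `ℓ` vanishes, and `∂_{j₀} ⋯ ∂_{j_ℓ} f (x₀)` counts the permutations `σ` with
`j = i ∘ σ`. So the commutator at `x₀` is twice `∑_σ ∂^{i_{σ 0}} c^{i_{σ 1} … i_{σ ℓ}}`, the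
symmetrized gradient of the top-order coefficients, which therefore vanishes. Symmetrizing the
coefficients into `V` leaves this sum unchanged.
-/

open scoped ContDiff

section Calculus

variable {n : ℕ}

lemma pd_add {u v : (Fin n → ℝ) → ℝ} (a : Fin n) (hu : Differentiable ℝ u)
    (hv : Differentiable ℝ v) :
    pd a (fun x => u x + v x) = fun x => pd a u x + pd a v x := by
  funext x
  simp [pd, fderiv_fun_add (hu x) (hv x)]

lemma pd_mul {u v : (Fin n → ℝ) → ℝ} (a : Fin n) (hu : Differentiable ℝ u)
    (hv : Differentiable ℝ v) :
    pd a (fun x => u x * v x) = fun x => pd a u x * v x + u x * pd a v x := by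
  funext x
  simp [pd, fderiv_fun_mul (hu x) (hv x)]
  ring

lemma pd_const_mul {u : (Fin n → ℝ) → ℝ} (a : Fin n) (r : ℝ) (hu : Differentiable ℝ u) :
    pd a (fun x => r * u x) = fun x => r * pd a u x := by
  funext x
  simp [pd, fderiv_const_mul (hu x) r]

lemma pd_sum {ι : Type*} (s : Finset ι) {f : ι → (Fin n → ℝ) → ℝ} (a : Fin n)
    (hf : ∀ i ∈ s, Differentiable ℝ (f i)) :
    pd a (fun x => ∑ i ∈ s, f i x) = fun x => ∑ i ∈ s, pd a (f i) x := by
  funext x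
  simp [pd, fderiv_fun_sum (fun i hi => (hf i hi).differentiableAt)]

lemma ContDiff.pd {f : (Fin n → ℝ) → ℝ} (hf : ContDiff ℝ ∞ f) (a : Fin n) :
    ContDiff ℝ ∞ (pd a f) :=
  (contDiff_infty_iff_fderiv.mp hf).2.clm_apply contDiff_const

lemma ContDiff.pdIter {f : (Fin n → ℝ) → ℝ} (hf : ContDiff ℝ ∞ f) :
    ∀ (m : ℕ) (J : Fin m → Fin n), ContDiff ℝ ∞ (pdIter m J f)
  | 0, _ => hf
  | m + 1, _ => (hf.pdIter m _).pd _

lemma pd_pdIter {m : ℕ} (a : Fin n) (J : Fin m → Fin n) (f : (Fin n → ℝ) → ℝ) :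
    pd a (pdIter m J f) = pdIter (m + 1) (Fin.cons a J) f := by
  simp [pdIter]

lemma pd_comm {f : (Fin n → ℝ) → ℝ} (hf : ContDiff ℝ ∞ f) (a b : Fin n) :
    pd a (pd b f) = pd b (pd a f) := by
  funext x
  have hdiff : Differentiable ℝ (fderiv ℝ f) :=
    (contDiff_infty_iff_fderiv.mp hf).2.differentiable (by simp)
  have hsymm := hf.contDiffAt.isSymmSndFDerivAt (x := x) (by
    simpa using WithTop.coe_le_coe.mpr (le_top : (2 : ℕ∞) ≤ ⊤))
  change fderiv ℝ (fun y => fderiv ℝ f y (Pi.single b 1)) x (Pi.single a 1) =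
    fderiv ℝ (fun y => fderiv ℝ f y (Pi.single a 1)) x (Pi.single b 1)
  simpa [fderiv_clm_apply (hdiff x) (differentiableAt_const _)] using hsymm _ _

lemma pdIter_eq_iteratedFDeriv {f : (Fin n → ℝ) → ℝ} (hf : ContDiff ℝ ∞ f) :
    ∀ (m : ℕ) (J : Fin m → Fin n) (x : Fin n → ℝ),
      pdIter m J f x = iteratedFDeriv ℝ m f x (fun k => Pi.single (J k) 1)
  | 0, _, _ => by simp [pdIter]
  | m + 1, J, x => by
    have hdiff : Differentiable ℝ (iteratedFDeriv ℝ m f) :=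
      hf.differentiable_iteratedFDeriv (by exact_mod_cast WithTop.coe_lt_top _)
    have ih : pdIter m (fun k => J k.succ) f =
        fun y => iteratedFDeriv ℝ m f y (fun k => Pi.single (J k.succ) 1) :=
      funext (pdIter_eq_iteratedFDeriv hf m _)
    simp only [pdIter, _root_.pd, ih, fderiv_continuousMultilinear_apply_const_apply (hdiff x),
      iteratedFDeriv_succ_apply_left]
    rfl

end Calculus

lemma ContinuousMultilinearMap.iteratedFDeriv_comp_diagonal_zero_of_ne
    {𝕜 E F : Type*} [NontriviallyNormedField 𝕜] [NormedAddCommGroup E] [NormedSpace 𝕜 E]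
    [NormedAddCommGroup F] [NormedSpace 𝕜 F] [CompleteSpace F] {N m : ℕ}
    (M : E [×N]→L[𝕜] F) (hm : m ≠ N) :
    iteratedFDeriv 𝕜 m (fun x => M (fun _ => x)) 0 = 0 := by
  let diag : E →L[𝕜] (Fin N → E) := ContinuousLinearMap.pi fun _ => ContinuousLinearMap.id 𝕜 E
  have hM := M.hasFiniteFPowerSeriesOnBall.toHasFPowerSeriesOnBall
  have hdiag : HasFPowerSeriesOnBall (M ∘ diag) _ 0 _ :=
    (show HasFPowerSeriesOnBall M _ (diag 0) _ by simpa using hM).compContinuousLinearMap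
  ext v
  rw [show (fun x => M (fun _ => x)) = M ∘ diag from rfl,
    hdiag.iteratedFDeriv_eq_sum_of_completeSpace]
  simp [FormalMultilinearSeries.compContinuousLinearMap,
    ContinuousMultilinearMap.toFormalMultilinearSeries, Ne.symm hm]

section Monomial

variable {n N : ℕ}

def coordMonomial (q : Fin N → Fin n) (x₀ : Fin n → ℝ) : (Fin n → ℝ) → ℝ :=
  fun x => ∏ k, (x (q k) - x₀ (q k))

def coordMonomialMap (q : Fin N → Fin n) : (Fin n → ℝ) [×N]→L[ℝ] ℝ :=
  (ContinuousMultilinearMap.mkPiAlgebra ℝ (Fin N) ℝ).compContinuousLinearMap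
    fun k => ContinuousLinearMap.proj (q k)

-- Seeing the monomial on the diagonal of a multilinear map gives access to Mathlib's
-- formulas for the iterated derivatives of `x ↦ M (x, …, x)`.
lemma coordMonomial_eq (q : Fin N → Fin n) (x₀ : Fin n → ℝ) :
    coordMonomial q x₀ = fun x => coordMonomialMap q (fun _ => x - x₀) := by
  funext x
  simp [coordMonomial, coordMonomialMap]

lemma contDiff_coordMonomial (q : Fin N → Fin n) (x₀ : Fin n → ℝ) :
    ContDiff ℝ ∞ (coordMonomial q x₀) := by
  rw [coordMonomial_eq]
  exact (coordMonomialMap q).contDiff.comp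
    (contDiff_pi.2 fun _ => contDiff_id.sub contDiff_const)

lemma pdIter_coordMonomial_of_ne (q : Fin N → Fin n) (x₀ : Fin n → ℝ) {m : ℕ} (hm : m ≠ N)
    (J : Fin m → Fin n) : pdIter m J (coordMonomial q x₀) x₀ = 0 := by
  rw [pdIter_eq_iteratedFDeriv (contDiff_coordMonomial q x₀), coordMonomial_eq,
    iteratedFDeriv_comp_sub (f := fun y => coordMonomialMap q fun _ => y), sub_self,
    (coordMonomialMap q).iteratedFDeriv_comp_diagonal_zero_of_ne hm]
  rfl

lemma pdIter_coordMonomial_self (q : Fin N → Fin n) (x₀ : Fin n → ℝ) (J : Fin N → Fin n) :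
    pdIter N J (coordMonomial q x₀) x₀ =
      ∑ σ : Equiv.Perm (Fin N), if J = q ∘ σ then 1 else 0 := by
  rw [pdIter_eq_iteratedFDeriv (contDiff_coordMonomial q x₀), coordMonomial_eq,
    iteratedFDeriv_comp_sub (f := fun y => coordMonomialMap q fun _ => y),
    (coordMonomialMap q).iteratedFDeriv_comp_diagonal,
    ← Equiv.sum_comp (Equiv.inv (Equiv.Perm (Fin N)))]
  refine Finset.sum_congr rfl fun σ _ => ?_
  simp only [coordMonomialMap, ContinuousMultilinearMap.compContinuousLinearMap_apply,
    ContinuousMultilinearMap.mkPiAlgebra_apply, ContinuousLinearMap.proj_apply, Pi.single_apply,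
    Finset.prod_boole, Finset.mem_univ, true_implies, funext_iff, Function.comp_apply]
  exact if_congr ⟨fun h x => by simpa using (h (σ x)).symm,
    fun h i => by simpa using (h (σ.symm i)).symm⟩ rfl rfl

end Monomial

section Laplacian

variable {n : ℕ} (ginv : Matrix (Fin n) (Fin n) ℝ)

lemma lap_sum {ι : Type*} (s : Finset ι) {f : ι → (Fin n → ℝ) → ℝ}
    (hf : ∀ i ∈ s, ContDiff ℝ ∞ (f i)) :
    lap ginv (fun x => ∑ i ∈ s, f i x) = fun x => ∑ i ∈ s, lap ginv (f i) x := by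
  have hpd : ∀ b, pd b (fun x => ∑ i ∈ s, f i x) = fun x => ∑ i ∈ s, pd b (f i) x :=
    fun b => pd_sum s b fun i hi => (hf i hi).differentiable (by simp)
  have hpd2 : ∀ a b, pd a (fun x => ∑ i ∈ s, pd b (f i) x) =
      fun x => ∑ i ∈ s, pd a (pd b (f i)) x :=
    fun a b => pd_sum s a fun i hi => ((hf i hi).pd b).differentiable (by simp)
  funext x
  simp only [_root_.lap, hpd, hpd2, Finset.mul_sum]
  conv_rhs => rw [Finset.sum_comm]
  exact Finset.sum_congr rfl fun a _ => by rw [Finset.sum_comm]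

lemma pd_pd_mul {u v : (Fin n → ℝ) → ℝ} (hu : ContDiff ℝ ∞ u) (hv : ContDiff ℝ ∞ v)
    (a b : Fin n) :
    pd a (pd b (fun x => u x * v x)) = fun x =>
      pd a (pd b u) x * v x + pd b u x * pd a v x + pd a u x * pd b v x +
        u x * pd a (pd b v) x := by
  have hd : ∀ {w : (Fin n → ℝ) → ℝ}, ContDiff ℝ ∞ w → Differentiable ℝ w :=
    fun hw => hw.differentiable (by simp)
  rw [pd_mul b (hd hu) (hd hv),
    pd_add (u := fun x => pd b u x * v x) (v := fun x => u x * pd b v x) a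
      ((hd (hu.pd b)).mul (hd hv)) ((hd hu).mul (hd (hv.pd b))),
    pd_mul a (hd (hu.pd b)) (hd hv), pd_mul a (hd hu) (hd (hv.pd b))]
  funext x
  ring

lemma lap_mul (hginv : ginv.IsSymm) {u v : (Fin n → ℝ) → ℝ} (hu : ContDiff ℝ ∞ u)
    (hv : ContDiff ℝ ∞ v) :
    lap ginv (fun x => u x * v x) = fun x =>
      lap ginv u x * v x + 2 * ∑ a, pdUp ginv a u x * pd a v x + u x * lap ginv v x := by
  funext x
  have hswap : ∑ a, ∑ b, ginv a b * (pd a u x * pd b v x) =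
      ∑ a, ∑ b, ginv a b * (pd b u x * pd a v x) := by
    rw [Finset.sum_comm]
    simp_rw [hginv.apply]
  simp only [_root_.lap, pdUp, pd_pd_mul hu hv, mul_add, Finset.sum_add_distrib, hswap,
    Finset.sum_mul, Finset.mul_sum]
  simp only [← Finset.sum_add_distrib]
  exact Finset.sum_congr rfl fun a _ => Finset.sum_congr rfl fun b _ => by ring

lemma pd_lap {f : (Fin n → ℝ) → ℝ} (hf : ContDiff ℝ ∞ f) (a : Fin n) :
    pd a (lap ginv f) = lap ginv (pd a f) := by
  have hterm : ∀ b c, ContDiff ℝ ∞ fun x => ginv b c * pd b (pd c f) x :=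
    fun b c => contDiff_const.mul ((hf.pd c).pd b)
  change pd a (fun x => ∑ b, ∑ c, ginv b c * pd b (pd c f) x) = _
  rw [pd_sum _ a fun b _ => (ContDiff.sum fun c _ => hterm b c).differentiable (by simp)]
  funext x
  simp only [pd_sum _ a fun c _ => (hterm _ c).differentiable (by simp),
    pd_const_mul a _ (((hf.pd _).pd _).differentiable (by simp)), _root_.lap,
    pd_comm (hf.pd _) a, pd_comm hf a]

lemma pdIter_lap {f : (Fin n → ℝ) → ℝ} (hf : ContDiff ℝ ∞ f) :
    ∀ (m : ℕ) (J : Fin m → Fin n), pdIter m J (lap ginv f) = lap ginv (pdIter m J f)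
  | 0, _ => rfl
  | m + 1, J => by
    simp only [pdIter, pdIter_lap hf m, pd_lap ginv (hf.pdIter m _)]

end Laplacian

lemma Fin.sum_sum_ite_cons_eq {α M : Type*} [Fintype α] [DecidableEq α] [AddCommMonoid M]
    {m : ℕ} (w : Fin (m + 1) → α) (h : α → (Fin m → α) → M) :
    ∑ J, ∑ a, (if Fin.cons a J = w then h a J else 0) = h (w 0) (Fin.tail w) := by
  obtain ⟨a₀, J₀, rfl⟩ : ∃ a₀ J₀, w = Fin.cons a₀ J₀ :=
    ⟨w 0, Fin.tail w, (Fin.cons_self_tail w).symm⟩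
  simp [Fin.cons_inj, ite_and]

section Operator

variable {n ℓ : ℕ} (ginv : Matrix (Fin n) (Fin n) ℝ)

noncomputable def diffOp (c : (m : Fin (ℓ + 1)) → (Fin (m : ℕ) → Fin n) → (Fin n → ℝ) → ℝ)
    (f : (Fin n → ℝ) → ℝ) : (Fin n → ℝ) → ℝ :=
  fun x => ∑ m : Fin (ℓ + 1), ∑ J : Fin (m : ℕ) → Fin n, c m J x * pdIter m J f x

-- `(ℓ + 1)! ∂^{(i₀} k^{i₁ … i_ℓ)}`, the left-hand side of the Killing equation.
noncomputable def symmGrad (k : (Fin ℓ → Fin n) → (Fin n → ℝ) → ℝ) (i : Fin (ℓ + 1) → Fin n)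
    (x : Fin n → ℝ) : ℝ :=
  ∑ σ : Equiv.Perm (Fin (ℓ + 1)), pdUp ginv (i (σ 0)) (k fun j => i (σ j.succ)) x

lemma lap_diffOp_sub_diffOp_lap (hginv : ginv.IsSymm)
    {c : (m : Fin (ℓ + 1)) → (Fin (m : ℕ) → Fin n) → (Fin n → ℝ) → ℝ}
    (hc : ∀ m J, ContDiff ℝ ∞ (c m J)) {f : (Fin n → ℝ) → ℝ} (hf : ContDiff ℝ ∞ f)
    (x : Fin n → ℝ) :
    lap ginv (diffOp c f) x - diffOp c (lap ginv f) x =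
      ∑ m : Fin (ℓ + 1), ∑ J : Fin (m : ℕ) → Fin n,
        (lap ginv (c m J) x * pdIter m J f x +
          2 * ∑ a, pdUp ginv a (c m J) x * pd a (pdIter m J f) x) := by
  have hterm : ∀ m J, ContDiff ℝ ∞ fun x => c m J x * pdIter m J f x :=
    fun m J => (hc m J).mul (hf.pdIter m J)
  unfold diffOp
  simp only [lap_sum ginv _ fun m _ => ContDiff.sum fun J _ => hterm m J,
    lap_sum ginv _ fun J _ => hterm _ J, lap_mul ginv hginv (hc _ _) (hf.pdIter _ _),
    pdIter_lap ginv hf, ← Finset.sum_sub_distrib]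
  exact Finset.sum_congr rfl fun m _ => Finset.sum_congr rfl fun J _ => by ring

lemma symmGrad_last_eq_zero_of_commute (hginv : ginv.IsSymm)
    {c : (m : Fin (ℓ + 1)) → (Fin (m : ℕ) → Fin n) → (Fin n → ℝ) → ℝ}
    (hc : ∀ m J, ContDiff ℝ ∞ (c m J))
    (hcomm : ∀ f, ContDiff ℝ ∞ f → ∀ x, lap ginv (diffOp c f) x = diffOp c (lap ginv f) x)
    (i : Fin (ℓ + 1) → Fin n) (x₀ : Fin n → ℝ) :
    symmGrad ginv (c (Fin.last ℓ)) i x₀ = 0 := by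
  set f := coordMonomial i x₀
  have hf : ContDiff ℝ ∞ f := contDiff_coordMonomial i x₀
  have hvanish : ∀ (m : Fin (ℓ + 1)) J, pdIter m J f x₀ = 0 :=
    fun m J => pdIter_coordMonomial_of_ne i x₀ m.isLt.ne J
  have hvanish_succ : ∀ m ≠ Fin.last ℓ, ∀ a (J : Fin (m : ℕ) → Fin n),
      pd a (pdIter m J f) x₀ = 0 := by
    intro m hm a J
    rw [pd_pdIter]
    exact pdIter_coordMonomial_of_ne i x₀ (by simpa [Fin.ext_iff] using hm) _
  have htop : ∀ a (J : Fin (Fin.last ℓ : ℕ) → Fin n), pd a (pdIter (Fin.last ℓ) J f) x₀ =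
      ∑ σ : Equiv.Perm (Fin (ℓ + 1)), if Fin.cons a J = i ∘ σ then 1 else 0 :=
    fun a J => by rw [pd_pdIter]; exact pdIter_coordMonomial_self i x₀ _
  have h := lap_diffOp_sub_diffOp_lap ginv hginv hc hf x₀
  rw [hcomm f hf x₀, sub_self, Fintype.sum_eq_single (Fin.last ℓ)
    fun m hm => by simp [hvanish, hvanish_succ m hm]] at h
  simp only [hvanish, htop, mul_zero, zero_add, Finset.mul_sum, mul_ite, mul_one,
    Finset.sum_comm (t := (Finset.univ : Finset (Equiv.Perm (Fin (ℓ + 1)))))] at h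
  simp only [Fin.sum_sum_ite_cons_eq, ← Finset.mul_sum] at h
  change 0 = 2 * symmGrad ginv (c (Fin.last ℓ)) i x₀ at h
  linarith

end Operator

section Symmetrize

variable {n ℓ : ℕ}

noncomputable def symmetrize (k : (Fin ℓ → Fin n) → (Fin n → ℝ) → ℝ) :
    (Fin ℓ → Fin n) → (Fin n → ℝ) → ℝ :=
  fun t x => (ℓ.factorial : ℝ)⁻¹ * ∑ τ : Equiv.Perm (Fin ℓ), k (t ∘ τ) x

lemma symmetrize_comp_perm (k : (Fin ℓ → Fin n) → (Fin n → ℝ) → ℝ) (σ : Equiv.Perm (Fin ℓ))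
    (t : Fin ℓ → Fin n) : symmetrize k (t ∘ σ) = symmetrize k t := by
  funext x
  simp only [symmetrize]
  congr 1
  exact Fintype.sum_equiv (Equiv.mulLeft σ) _ _ fun τ => rfl

lemma contDiff_symmetrize {k : (Fin ℓ → Fin n) → (Fin n → ℝ) → ℝ}
    (hk : ∀ t, ContDiff ℝ ∞ (k t)) (t : Fin ℓ → Fin n) : ContDiff ℝ ∞ (symmetrize k t) :=
  contDiff_const.mul (ContDiff.sum fun τ _ => hk (t ∘ τ))

lemma pd_symmetrize {k : (Fin ℓ → Fin n) → (Fin n → ℝ) → ℝ}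
    (hk : ∀ t, ContDiff ℝ ∞ (k t)) (b : Fin n) (t : Fin ℓ → Fin n) :
    pd b (symmetrize k t) =
      fun x => (ℓ.factorial : ℝ)⁻¹ * ∑ τ : Equiv.Perm (Fin ℓ), pd b (k (t ∘ τ)) x := by
  have hsum : ContDiff ℝ ∞ fun x => ∑ τ : Equiv.Perm (Fin ℓ), k (t ∘ τ) x :=
    ContDiff.sum fun τ _ => hk (t ∘ τ)
  rw [show symmetrize k t = fun x => (ℓ.factorial : ℝ)⁻¹ * ∑ τ : Equiv.Perm (Fin ℓ), k (t ∘ τ) x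
      from rfl, pd_const_mul _ _ (hsum.differentiable (by simp)),
    pd_sum _ _ fun (τ : Equiv.Perm (Fin ℓ)) _ => (hk (t ∘ τ)).differentiable (by simp)]

variable (ginv : Matrix (Fin n) (Fin n) ℝ)

lemma pdUp_symmetrize {k : (Fin ℓ → Fin n) → (Fin n → ℝ) → ℝ}
    (hk : ∀ t, ContDiff ℝ ∞ (k t)) (a : Fin n) (t : Fin ℓ → Fin n) (x : Fin n → ℝ) :
    pdUp ginv a (symmetrize k t) x =
      (ℓ.factorial : ℝ)⁻¹ * ∑ τ : Equiv.Perm (Fin ℓ), pdUp ginv a (k (t ∘ τ)) x := by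
  simp only [pdUp, pd_symmetrize hk, Finset.mul_sum]
  rw [Finset.sum_comm]
  exact Finset.sum_congr rfl fun τ _ => Finset.sum_congr rfl fun b _ => by ring

lemma symmGrad_comp_perm (k : (Fin ℓ → Fin n) → (Fin n → ℝ) → ℝ) (τ : Equiv.Perm (Fin ℓ))
    (i : Fin (ℓ + 1) → Fin n) (x : Fin n → ℝ) :
    symmGrad ginv (fun t => k (t ∘ τ)) i x = symmGrad ginv k i x :=
  Fintype.sum_equiv (Equiv.mulRight (Equiv.Perm.decomposeFin.symm (0, τ))) _ _ fun σ => by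
    simp [Equiv.Perm.decomposeFin_symm_apply_succ, Function.comp_def]

lemma symmGrad_symmetrize {k : (Fin ℓ → Fin n) → (Fin n → ℝ) → ℝ}
    (hk : ∀ t, ContDiff ℝ ∞ (k t)) (i : Fin (ℓ + 1) → Fin n) (x : Fin n → ℝ) :
    symmGrad ginv (symmetrize k) i x = symmGrad ginv k i x := by
  calc symmGrad ginv (symmetrize k) i x
      = (ℓ.factorial : ℝ)⁻¹ *
          ∑ τ : Equiv.Perm (Fin ℓ), symmGrad ginv (fun t => k (t ∘ τ)) i x := by
        simp only [symmGrad, pdUp_symmetrize ginv hk, Finset.mul_sum]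
        exact Finset.sum_comm
    _ = symmGrad ginv k i x := by
        simp [symmGrad_comp_perm, Fintype.card_perm, Nat.factorial_ne_zero]

end Symmetrize

theorem stmt0_general {n ℓ : ℕ}
    (g ginv : Matrix (Fin n) (Fin n) ℝ) (hgsym : g.IsSymm) (hginv : g * ginv = 1)
    (c : (m : Fin (ℓ + 1)) → (Fin (m : ℕ) → Fin n) → (Fin n → ℝ) → ℝ)
    (hc : ∀ m i, ContDiff ℝ (⊤ : ℕ∞) (c m i))
    (D : ((Fin n → ℝ) → ℝ) → ((Fin n → ℝ) → ℝ))
    (hD : ∀ f x, D f x =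
      ∑ m : Fin (ℓ + 1), ∑ i : Fin (m : ℕ) → Fin n, c m i x * pdIter (m : ℕ) i f x)
    (V : (Fin ℓ → Fin n) → (Fin n → ℝ) → ℝ)
    (hV : ∀ i x, V i x =
      (ℓ.factorial : ℝ)⁻¹ * ∑ σ : Equiv.Perm (Fin ℓ), c (Fin.last ℓ) (i ∘ σ) x)
    (hcomm : ∀ f, ContDiff ℝ (⊤ : ℕ∞) f → ∀ x, lap ginv (D f) x = D (lap ginv f) x) :
    IsKillingTensor ginv ℓ V := by
  have hginv_symm : ginv.IsSymm := Matrix.inv_eq_right_inv hginv ▸ hgsym.inv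
  obtain rfl : D = diffOp c := funext fun f => funext (hD f)
  obtain rfl : V = symmetrize (c (Fin.last ℓ)) := funext fun t => funext (hV t)
  refine ⟨contDiff_symmetrize (hc (Fin.last ℓ)), symmetrize_comp_perm _, fun i x => ?_⟩
  exact (symmGrad_symmetrize ginv (hc (Fin.last ℓ)) i x).trans
    (symmGrad_last_eq_zero_of_commute ginv hginv_symm hc hcomm i x)

/-- if a linear differential operator `D` of order at most `ℓ`
(with smooth coefficients `c`) commutes with the Laplacian on smooth functions,
then its principal symbol (the symmetrization of the order-`ℓ` coefficients)
is a Killing `ℓ`-tensor. -/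
theorem stmt0 {n ℓ : ℕ} (hn : 0 < n)
    (g ginv : Matrix (Fin n) (Fin n) ℝ) (hgsym : g.IsSymm) (hginv : g * ginv = 1)
    (c : (m : Fin (ℓ + 1)) → (Fin (m : ℕ) → Fin n) → (Fin n → ℝ) → ℝ)
    (hc : ∀ m i, ContDiff ℝ (⊤ : ℕ∞) (c m i))
    (D : ((Fin n → ℝ) → ℝ) → ((Fin n → ℝ) → ℝ))
    (hD : ∀ f x, D f x =
      ∑ m : Fin (ℓ + 1), ∑ i : Fin (m : ℕ) → Fin n, c m i x * pdIter (m : ℕ) i f x)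
    (V : (Fin ℓ → Fin n) → (Fin n → ℝ) → ℝ)
    (hV : ∀ i x, V i x =
      (ℓ.factorial : ℝ)⁻¹ * ∑ σ : Equiv.Perm (Fin ℓ), c (Fin.last ℓ) (i ∘ σ) x)
    (hcomm : ∀ f, ContDiff ℝ (⊤ : ℕ∞) f → ∀ x, lap ginv (D f) x = D (lap ginv f) x) :
    IsKillingTensor ginv ℓ V :=
  stmt0_general g ginv hgsym hginv c hc D hD V hV hcomm
end

section
/- Let k^{a₁…a_ℓ} be a Killing ℓ-tensor on ℝ^n. Then every partial derivative of order ℓ+1 of every component of k vanishes identically: ∂_{b₀}∂_{b₁}⋯∂_{b_ℓ} k^{a₁…a_ℓ} = 0 for all indices b₀,…,b_ℓ, a₁,…,a_ℓ. Equivalently, each component of k is a polynomial function of degree at most ℓ. -/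
open scoped ContDiff

section DirDeriv

variable {E : Type*} [NormedAddCommGroup E] [NormedSpace ℝ E]

noncomputable def dirDeriv (v : E) (f : E → ℝ) : E → ℝ := fun x => fderiv ℝ f x v

theorem contDiff_dirDeriv {f : E → ℝ} (hf : ContDiff ℝ ∞ f) (v : E) :
    ContDiff ℝ ∞ (dirDeriv v f) :=
  (hf.fderiv_right (by simp)).clm_apply contDiff_const

theorem contDiff_iterate_dirDeriv {f : E → ℝ} (hf : ContDiff ℝ ∞ f) (v : E) (m : ℕ) :
    ContDiff ℝ ∞ ((dirDeriv v)^[m] f) := by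
  induction m with
  | zero => exact hf
  | succ m ih => simpa only [Function.iterate_succ_apply'] using contDiff_dirDeriv ih v

@[simp] theorem dirDeriv_zero (v : E) : dirDeriv v (0 : E → ℝ) = 0 := by
  ext x; simp [dirDeriv]

theorem dirDeriv_neg (v : E) (f : E → ℝ) : dirDeriv v (-f) = -dirDeriv v f := by
  ext x; simp [dirDeriv, fderiv_neg]

theorem iterate_dirDeriv_neg (v : E) (f : E → ℝ) (m : ℕ) :
    (dirDeriv v)^[m] (-f) = -(dirDeriv v)^[m] f := by
  induction m with
  | zero => rfl
  | succ m ih => rw [Function.iterate_succ_apply', ih, dirDeriv_neg, Function.iterate_succ_apply']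

theorem dirDeriv_sum_mul {ι : Type*} (s : Finset ι) (c : ι → ℝ) {F : ι → E → ℝ}
    (hF : ∀ i ∈ s, Differentiable ℝ (F i)) (v : E) :
    dirDeriv v (fun y => ∑ i ∈ s, c i * F i y) = fun y => ∑ i ∈ s, c i * dirDeriv v (F i) y := by
  ext x
  have hF' : ∀ i ∈ s, DifferentiableAt ℝ (fun y => c i * F i y) x :=
    fun i hi => ((hF i hi) x).const_mul (c i)
  simp only [dirDeriv, fderiv_fun_sum hF', FunLike.coe_sum, Finset.sum_apply]
  exact Finset.sum_congr rfl fun i hi => by simp [fderiv_const_mul ((hF i hi) x) (c i)]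

theorem iterate_dirDeriv_sum_mul {ι : Type*} (s : Finset ι) (c : ι → ℝ) {F : ι → E → ℝ}
    (hF : ∀ i ∈ s, ContDiff ℝ ∞ (F i)) (v : E) (m : ℕ) :
    (dirDeriv v)^[m] (fun y => ∑ i ∈ s, c i * F i y) =
      fun y => ∑ i ∈ s, c i * (dirDeriv v)^[m] (F i) y := by
  induction m with
  | zero => rfl
  | succ m ih =>
    simp only [Function.iterate_succ_apply', ih]
    exact dirDeriv_sum_mul s c
      (fun i hi => (contDiff_iterate_dirDeriv (hF i hi) v m).differentiable (by simp)) v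

theorem dirDeriv_comm {f : E → ℝ} (hf : ContDiff ℝ 2 f) (u w : E) :
    dirDeriv u (dirDeriv w f) = dirDeriv w (dirDeriv u f) := by
  have hdd : Differentiable ℝ (fderiv ℝ f) :=
    (hf.fderiv_right (m := 1) (by norm_num)).differentiable one_ne_zero
  have second : ∀ x v v', dirDeriv v (dirDeriv v' f) x = fderiv ℝ (fderiv ℝ f) x v v' := by
    intro x v v'
    change fderiv ℝ (fun y => fderiv ℝ f y v') x v = _
    simp [fderiv_clm_apply (hdd x) (differentiableAt_const v')]
  ext x
  rw [second, second, (hf.contDiffAt.isSymmSndFDerivAt (by simp)).eq]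

theorem iterate_dirDeriv_comm {f : E → ℝ} (hf : ContDiff ℝ ∞ f) (u w : E) (m : ℕ) :
    (dirDeriv w)^[m] (dirDeriv u f) = dirDeriv u ((dirDeriv w)^[m] f) := by
  induction m with
  | zero => rfl
  | succ m ih =>
    rw [Function.iterate_succ_apply', ih, Function.iterate_succ_apply',
      dirDeriv_comm ((contDiff_iterate_dirDeriv hf w m).of_le ENat.LEInfty.out)]

theorem iterate_dirDeriv_eq_zero_of_chain {Q : ℕ → E → ℝ} (hQ : ∀ m, ContDiff ℝ ∞ (Q m))
    {u w : E} (hchain : ∀ m, dirDeriv w (Q m) = -dirDeriv u (Q (m + 1)))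
    {N : ℕ} (hN : Q (N + 1) = 0) : (dirDeriv w)^[N + 1] (Q 0) = 0 := by
  suffices h : ∀ r ≤ N + 1, (dirDeriv w)^[r] (Q (N + 1 - r)) = 0 by simpa using h (N + 1) le_rfl
  intro r
  induction r with
  | zero => simpa using hN
  | succ r ih =>
    intro hr
    obtain ⟨m, rfl⟩ : ∃ m, N = m + r := ⟨N - r, by omega⟩
    rw [show m + r + 1 - (r + 1) = m by omega, Function.iterate_succ_apply, hchain,
      iterate_dirDeriv_neg, iterate_dirDeriv_comm (hQ _), show m + 1 = m + r + 1 - r by omega,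
      ih (by omega), dirDeriv_zero, neg_zero]

theorem deriv_iterate_comp_smul {f : E → ℝ} (hf : ContDiff ℝ ∞ f) (x : E) (m : ℕ) (t : ℝ) :
    deriv^[m] (fun s : ℝ => f (s • x)) t = (dirDeriv x)^[m] f (t • x) := by
  induction m generalizing f with
  | zero => rfl
  | succ m ih =>
    have hline : deriv (fun s : ℝ => f (s • x)) = fun s => dirDeriv x f (s • x) := by
      ext s
      exact ((hf.differentiable (by simp) _).hasFDerivAt.comp_hasDerivAt s
        ((hasDerivAt_id s).smul_const x)).deriv.trans (by simp [dirDeriv])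
    rw [Function.iterate_succ_apply, hline, ih (contDiff_dirDeriv hf x),
      ← Function.iterate_succ_apply]

end DirDeriv

theorem Fintype.sum_fun_fin_succ {α M : Type*} [Fintype α] [AddCommMonoid M] (m : ℕ)
    (F : (Fin (m + 1) → α) → M) :
    ∑ c, F c = ∑ a, ∑ b : Fin m → α, F (Fin.cons a b) := by
  rw [← Fintype.sum_prod_type']
  exact (Fintype.sum_equiv (Fin.consEquiv fun _ => α) _ _ fun _ => rfl).symm

section Coordinates

variable {n : ℕ}

theorem pd_eq_dirDeriv (a : Fin n) (f : (Fin n → ℝ) → ℝ) : pd a f = dirDeriv (Pi.single a 1) f :=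
  rfl

theorem dirDeriv_eq_sum_pd (v : Fin n → ℝ) (f : (Fin n → ℝ) → ℝ) (x : Fin n → ℝ) :
    dirDeriv v f x = ∑ a, v a * pd a f x := by
  conv_lhs => rw [dirDeriv, ← Finset.univ_sum_single v]
  simp only [map_sum, pd]
  refine Finset.sum_congr rfl fun a _ => ?_
  rw [← smul_eq_mul, ← map_smul]
  simp [← Pi.single_smul]

theorem contDiff_pdIter {f : (Fin n → ℝ) → ℝ} (hf : ContDiff ℝ ∞ f) :
    ∀ (m : ℕ) (b : Fin m → Fin n), ContDiff ℝ ∞ (pdIter m b f)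
  | 0, _ => hf
  | m + 1, _ => contDiff_dirDeriv (contDiff_pdIter hf m _) _

theorem pdIter_cons (m : ℕ) (a : Fin n) (b : Fin m → Fin n) (f : (Fin n → ℝ) → ℝ) :
    pdIter (m + 1) (Fin.cons a b) f = pd a (pdIter m b f) :=
  rfl

theorem pdIter_comp_swap_castSucc_succ {f : (Fin n → ℝ) → ℝ} (hf : ContDiff ℝ ∞ f) :
    ∀ (m : ℕ) (i : Fin m) (b : Fin (m + 1) → Fin n),
      pdIter (m + 1) (b ∘ Equiv.swap i.castSucc i.succ) f = pdIter (m + 1) b f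
  | 0, i, _ => i.elim0
  | m + 1, i, b => by
    induction i using Fin.cases with
    | zero =>
      have hfix : ∀ j : Fin m, Equiv.swap (0 : Fin (m + 2)) 1 j.succ.succ = j.succ.succ :=
        fun j => Equiv.swap_apply_of_ne_of_ne (Fin.succ_ne_zero _) (Fin.succ_succ_ne_one j)
      simp only [pdIter, Function.comp_apply, Fin.castSucc_zero, Fin.succ_zero_eq_one,
        Equiv.swap_apply_left, Equiv.swap_apply_right, hfix, pd_eq_dirDeriv]
      exact dirDeriv_comm ((contDiff_pdIter hf m _).of_le ENat.LEInfty.out) _ _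
    | succ i =>
      have hsucc : ∀ j : Fin (m + 1), Equiv.swap i.castSucc.succ i.succ.succ j.succ =
          (Equiv.swap i.castSucc i.succ j).succ := fun j =>
        (Fin.succ_injective _).swap_apply _ _ _
      have hzero : Equiv.swap i.castSucc.succ i.succ.succ 0 = 0 :=
        Equiv.swap_apply_of_ne_of_ne (Fin.succ_ne_zero _).symm (Fin.succ_ne_zero _).symm
      simp only [pdIter, Function.comp_apply, ← Fin.succ_castSucc, hsucc, hzero]
      exact congrArg (pd (b 0)) (pdIter_comp_swap_castSucc_succ hf m i fun j => b j.succ)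

theorem pdIter_comp_perm {f : (Fin n → ℝ) → ℝ} (hf : ContDiff ℝ ∞ f) :
    ∀ {m : ℕ} (σ : Equiv.Perm (Fin m)) (b : Fin m → Fin n), pdIter m (b ∘ σ) f = pdIter m b f
  | 0, _, b => congrArg (pdIter 0 · f) (Subsingleton.elim _ b)
  | m + 1, σ, b => by
    have hσ : σ ∈ Submonoid.closure (Set.range fun i : Fin m => Equiv.swap i.castSucc i.succ) := by
      rw [Equiv.Perm.mclosure_swap_castSucc_succ]; trivial
    induction hσ using Submonoid.closure_induction generalizing b with
    | mem _ h =>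
      obtain ⟨i, rfl⟩ := h
      exact pdIter_comp_swap_castSucc_succ hf m i b
    | one => rfl
    | mul σ τ _ _ hσ hτ =>
      rw [Equiv.Perm.coe_mul, ← Function.comp_assoc, hτ, hσ]

theorem iterate_dirDeriv_eq_sum_pdIter {f : (Fin n → ℝ) → ℝ} (hf : ContDiff ℝ ∞ f)
    (v : Fin n → ℝ) (m : ℕ) (x : Fin n → ℝ) :
    (dirDeriv v)^[m] f x = ∑ b : Fin m → Fin n, (∏ j, v (b j)) * pdIter m b f x := by
  induction m generalizing x with
  | zero => simp [pdIter]
  | succ m ih =>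
    rw [Function.iterate_succ_apply', funext ih,
      dirDeriv_sum_mul _ _ (fun b _ => (contDiff_pdIter hf m b).differentiable (by simp)),
      Fintype.sum_fun_fin_succ, Finset.sum_comm]
    simp only [dirDeriv_eq_sum_pd, Finset.mul_sum, Fin.prod_univ_succ, Fin.cons_zero,
      Fin.cons_succ, pdIter_cons]
    exact Finset.sum_congr rfl fun a _ => Finset.sum_congr rfl fun b _ => by ring

end Coordinates

theorem exists_perm_eq_comp_of_card_fiber_eq {m : ℕ} {ι : Type*} [DecidableEq ι] {i i' : Fin m → ι}
    (h : ∀ a, Fintype.card {j // i' j = a} = Fintype.card {j // i j = a}) :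
    ∃ σ : Equiv.Perm (Fin m), i' = i ∘ σ :=
  ⟨Equiv.ofFiberEquiv fun a => Fintype.equivOfCardEq (h a),
    funext fun j => (Equiv.ofFiberEquiv_map _ j).symm⟩

theorem eq_zero_of_forall_sum_prod_mul_eq_zero {K ι : Type*} [Field K] [CharZero K] [Fintype ι]
    [DecidableEq ι] {m : ℕ} {T : (Fin m → ι) → K}
    (hT : ∀ (σ : Equiv.Perm (Fin m)) (i : Fin m → ι), T (i ∘ σ) = T i)
    (h : ∀ v : ι → K, ∑ i, (∏ j, v (i j)) * T i = 0) (i₀ : Fin m → ι) : T i₀ = 0 := by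
  -- compare the coefficients of the monomial of `i₀` in `∑ᵢ T i ∏ⱼ X (i j)`, which vanishes
  have := CharZero.infinite K
  let deg : (Fin m → ι) → ι →₀ ℕ := fun i => ∑ j, Finsupp.single (i j) 1
  have hdeg : ∀ i a, deg i a = Fintype.card {j // i j = a} := by
    intro i a
    rw [Finsupp.finsetSum_apply, Fintype.card_subtype, Finset.card_filter]
    simp [Finsupp.single_apply]
  have hX : ∀ i, (∏ j, MvPolynomial.X (i j) : MvPolynomial ι K) = MvPolynomial.monomial (deg i) 1 :=
    fun i => (MvPolynomial.monomial_sum_one _ _).symm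
  have hp : ∑ i, MvPolynomial.C (T i) * ∏ j, MvPolynomial.X (i j) = 0 :=
    MvPolynomial.funext fun v => by simpa [MvPolynomial.eval_prod, mul_comm] using h v
  have hcoeff := congrArg (MvPolynomial.coeff (deg i₀)) hp
  simp only [hX, MvPolynomial.coeff_sum, MvPolynomial.coeff_C_mul, MvPolynomial.coeff_monomial,
    mul_ite, mul_one, mul_zero, MvPolynomial.coeff_zero, ← Finset.sum_filter] at hcoeff
  have hfiber : ∀ i ∈ Finset.univ.filter (fun i => deg i = deg i₀), T i = T i₀ := by
    intro i hi
    obtain ⟨σ, rfl⟩ := exists_perm_eq_comp_of_card_fiber_eq (i := i₀) (i' := i) fun a => by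
      rw [← hdeg i a, ← hdeg i₀ a, (Finset.mem_filter.mp hi).2]
    exact hT σ i₀
  rw [Finset.sum_congr rfl hfiber, Finset.sum_const, nsmul_eq_mul] at hcoeff
  have hpos : (Finset.univ.filter (fun i => deg i = deg i₀)).card ≠ 0 :=
    Finset.card_ne_zero.mpr ⟨i₀, by simp⟩
  exact (mul_eq_zero.mp hcoeff).resolve_left (by exact_mod_cast hpos)

section Killing

open Matrix

variable {n ℓ : ℕ} {ginv : Matrix (Fin n) (Fin n) ℝ} {k : (Fin ℓ → Fin n) → (Fin n → ℝ) → ℝ}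

theorem IsKillingTensor.sum_prod_mul_pdUp_eq_zero (hk : IsKillingTensor ginv ℓ k)
    (u x : Fin n → ℝ) :
    ∑ i : Fin (ℓ + 1) → Fin n, (∏ j, u (i j)) * pdUp ginv (i 0) (k fun j => i j.succ) x = 0 := by
  -- after contraction with the symmetric `u ⊗ ⋯ ⊗ u`, all terms of the symmetrization agree
  have hperm : ∀ σ : Equiv.Perm (Fin (ℓ + 1)),
      ∑ i : Fin (ℓ + 1) → Fin n, (∏ j, u (i j)) * pdUp ginv (i (σ 0)) (k fun j => i (σ j.succ)) x =
        ∑ i : Fin (ℓ + 1) → Fin n, (∏ j, u (i j)) * pdUp ginv (i 0) (k fun j => i j.succ) x :=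
    fun σ => Fintype.sum_equiv (σ.symm.arrowCongr (Equiv.refl _)) _ _ fun i => by
      simp [Equiv.prod_comp σ fun j => u (i j)]
  have hsum : ∑ i : Fin (ℓ + 1) → Fin n, (∏ j, u (i j)) *
      ∑ σ : Equiv.Perm (Fin (ℓ + 1)), pdUp ginv (i (σ 0)) (k fun j => i (σ j.succ)) x = 0 :=
    Finset.sum_eq_zero fun i _ => by rw [hk.2.2 i x, mul_zero]
  simp_rw [Finset.mul_sum] at hsum
  rw [Finset.sum_comm, Finset.sum_congr rfl fun σ _ => hperm σ, Finset.sum_const,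
    nsmul_eq_mul] at hsum
  exact (mul_eq_zero.mp hsum).resolve_left (by simp [Fintype.card_ne_zero])

theorem IsKillingTensor.sum_prod_mul_dirDeriv_eq_zero (hk : IsKillingTensor ginv ℓ k)
    (u x : Fin n → ℝ) :
    ∑ i, (∏ j, u (i j)) * dirDeriv (u ᵥ* ginv) (k i) x = 0 := by
  rw [← hk.sum_prod_mul_pdUp_eq_zero u x, Fintype.sum_fun_fin_succ, Finset.sum_comm]
  simp only [Fin.prod_univ_succ, Fin.cons_zero, Fin.cons_succ, dirDeriv_eq_sum_pd, pdUp,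
    Matrix.vecMul, dotProduct, Finset.sum_mul, Finset.mul_sum]
  refine Finset.sum_congr rfl fun i _ => ?_
  rw [Finset.sum_comm]
  exact Finset.sum_congr rfl fun a _ => Finset.sum_congr rfl fun b _ => by ring

noncomputable def monomialAlongLine (u w : Fin n → ℝ) (i : Fin ℓ → Fin n) : Polynomial ℝ :=
  ∏ j, (Polynomial.C (w (i j)) * Polynomial.X + Polynomial.C (u (i j)))

theorem eval_monomialAlongLine (u w : Fin n → ℝ) (i : Fin ℓ → Fin n) (t : ℝ) :
    (monomialAlongLine u w i).eval t = ∏ j, (u + t • w) (i j) := by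
  simp only [monomialAlongLine, Polynomial.eval_prod, Polynomial.eval_add, Polynomial.eval_mul,
    Polynomial.eval_C, Polynomial.eval_X, Pi.add_apply, Pi.smul_apply, smul_eq_mul]
  exact Finset.prod_congr rfl fun j _ => by ring

theorem natDegree_monomialAlongLine_le (u w : Fin n → ℝ) (i : Fin ℓ → Fin n) :
    (monomialAlongLine u w i).natDegree ≤ ℓ :=
  (Polynomial.natDegree_prod_le _ _).trans <|
    (Finset.sum_le_card_nsmul _ _ 1 fun _ _ => Polynomial.natDegree_linear_le).trans (by simp)

/-- The functions `Q_m` with `∑ᵢ (∏ⱼ (u + t w) (i j)) * k i = ∑ₘ tᵐ Q_m`. -/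
noncomputable def lineCoeff (k : (Fin ℓ → Fin n) → (Fin n → ℝ) → ℝ) (u w : Fin n → ℝ) (m : ℕ) :
    (Fin n → ℝ) → ℝ :=
  fun y => ∑ i, (monomialAlongLine u w i).coeff m * k i y

theorem lineCoeff_zero (u w : Fin n → ℝ) :
    lineCoeff k u w 0 = fun y => ∑ i, (∏ j, u (i j)) * k i y := by
  ext y
  simp [lineCoeff, monomialAlongLine, Polynomial.coeff_zero_prod]

theorem lineCoeff_of_lt {u w : Fin n → ℝ} {m : ℕ} (hm : ℓ < m) : lineCoeff k u w m = 0 :=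
  funext fun _ => Finset.sum_eq_zero fun i _ => by
    rw [Polynomial.coeff_eq_zero_of_natDegree_lt
      ((natDegree_monomialAlongLine_le u w i).trans_lt hm), zero_mul]

theorem IsKillingTensor.dirDeriv_lineCoeff (hk : IsKillingTensor ginv ℓ k) (u w v : Fin n → ℝ)
    (m : ℕ) (y : Fin n → ℝ) :
    dirDeriv v (lineCoeff k u w m) y =
      ∑ i, (monomialAlongLine u w i).coeff m * dirDeriv v (k i) y :=
  congrFun (dirDeriv_sum_mul _ _ (fun i _ => (hk.1 i).differentiable (by simp)) v) y

theorem IsKillingTensor.dirDeriv_lineCoeff_chain (hk : IsKillingTensor ginv ℓ k)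
    (u w : Fin n → ℝ) (m : ℕ) :
    dirDeriv (w ᵥ* ginv) (lineCoeff k u w m) = -dirDeriv (u ᵥ* ginv) (lineCoeff k u w (m + 1)) := by
  ext y
  let A : Polynomial ℝ :=
    ∑ i, Polynomial.C (dirDeriv (u ᵥ* ginv) (k i) y) * monomialAlongLine u w i
  let B : Polynomial ℝ :=
    ∑ i, Polynomial.C (dirDeriv (w ᵥ* ginv) (k i) y) * monomialAlongLine u w i
  -- the contracted Killing equation for `u + t w`, as a polynomial identity in `t`
  have hAB : A + Polynomial.X * B = 0 := Polynomial.funext fun t => by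
    have hlin : ∀ f, dirDeriv ((u + t • w) ᵥ* ginv) f y =
        dirDeriv (u ᵥ* ginv) f y + t * dirDeriv (w ᵥ* ginv) f y := fun f => by
      simp [dirDeriv, add_vecMul, smul_vecMul]
    rw [Polynomial.eval_add, Polynomial.eval_mul, Polynomial.eval_X, Polynomial.eval_zero,
      ← hk.sum_prod_mul_dirDeriv_eq_zero (u + t • w) y]
    simp only [A, B, Polynomial.eval_finsetSum, Polynomial.eval_mul, Polynomial.eval_C,
      eval_monomialAlongLine, hlin, Finset.mul_sum, ← Finset.sum_add_distrib]
    exact Finset.sum_congr rfl fun i _ => by ring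
  have hcoeff := congrArg (Polynomial.coeff · (m + 1)) hAB
  simp only [A, B, Polynomial.coeff_add, Polynomial.coeff_X_mul, Polynomial.finsetSum_coeff,
    Polynomial.coeff_C_mul, Polynomial.coeff_zero] at hcoeff
  rw [hk.dirDeriv_lineCoeff, Pi.neg_apply, hk.dirDeriv_lineCoeff]
  simp only [mul_comm ((monomialAlongLine u w _).coeff _)]
  linarith

theorem IsKillingTensor.sum_prod_mul_iterate_dirDeriv_eq_zero (hk : IsKillingTensor ginv ℓ k)
    (u w x : Fin n → ℝ) :
    ∑ i, (∏ j, u (i j)) * (dirDeriv (w ᵥ* ginv))^[ℓ + 1] (k i) x = 0 := by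
  have hsmooth : ∀ m, ContDiff ℝ ∞ (lineCoeff k u w m) :=
    fun m => ContDiff.sum fun i _ => contDiff_const.mul (hk.1 i)
  have := iterate_dirDeriv_eq_zero_of_chain hsmooth (hk.dirDeriv_lineCoeff_chain u w)
    (lineCoeff_of_lt (Nat.lt_succ_self ℓ))
  rw [lineCoeff_zero, iterate_dirDeriv_sum_mul _ _ (fun i _ => hk.1 i)] at this
  exact congrFun this x

theorem IsKillingTensor.pdIter_eq_zero {g : Matrix (Fin n) (Fin n) ℝ} (hginv : g * ginv = 1)
    (hk : IsKillingTensor ginv ℓ k) (b : Fin (ℓ + 1) → Fin n) (i : Fin ℓ → Fin n)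
    (x : Fin n → ℝ) : pdIter (ℓ + 1) b (k i) x = 0 := by
  have hdir : ∀ v i, (dirDeriv v)^[ℓ + 1] (k i) x = 0 := by
    intro v
    have hv : (v ᵥ* g) ᵥ* ginv = v := by rw [vecMul_vecMul, hginv, vecMul_one]
    refine eq_zero_of_forall_sum_prod_mul_eq_zero (fun σ i => by rw [hk.2.1]) fun u => ?_
    rw [← hv]
    exact hk.sum_prod_mul_iterate_dirDeriv_eq_zero u (v ᵥ* g) x
  refine eq_zero_of_forall_sum_prod_mul_eq_zero (T := fun b => pdIter (ℓ + 1) b (k i) x)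
    (fun σ b => congrFun (pdIter_comp_perm (hk.1 i) σ b) x) (fun v => ?_) b
  rw [← iterate_dirDeriv_eq_sum_pdIter (hk.1 i)]
  exact hdir v i

end Killing

open Nat in
theorem eq_sum_iteratedDeriv_of_iteratedDeriv_eq_zero {h : ℝ → ℝ} (hh : ContDiff ℝ ∞ h) {N : ℕ}
    (hN : ∀ t, iteratedDeriv (N + 1) h t = 0) (x : ℝ) :
    h x = ∑ m ∈ Finset.range (N + 1), iteratedDeriv m h 0 / m ! * x ^ m := by
  rcases eq_or_ne x 0 with rfl | hx
  · simp [Finset.sum_range_succ']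
  obtain ⟨x', -, hx'⟩ := taylor_mean_remainder_lagrange_iteratedDeriv hx.symm
    (hh.contDiffOn.of_le (by exact_mod_cast WithTop.coe_le_coe.2 le_top))
  rw [hN, zero_mul, zero_div, sub_eq_zero, taylor_within_apply] at hx'
  rw [hx']
  refine Finset.sum_congr rfl fun m _ => ?_
  rw [iteratedDerivWithin_eq_iteratedDeriv (uniqueDiffOn_uIcc hx.symm)
    (hh.contDiffAt.of_le ENat.LEInfty.out) Set.left_mem_uIcc]
  simp [div_eq_inv_mul]
  ring

open Nat in
theorem exists_mvPolynomial_of_pdIter_eq_zero {n ℓ : ℕ} {f : (Fin n → ℝ) → ℝ}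
    (hf : ContDiff ℝ ∞ f) (h : ∀ b y, pdIter (ℓ + 1) b f y = 0) :
    ∃ p : MvPolynomial (Fin n) ℝ, p.totalDegree ≤ ℓ ∧ ∀ x, f x = MvPolynomial.eval x p := by
  refine ⟨∑ m ∈ Finset.range (ℓ + 1), ∑ b : Fin m → Fin n,
    MvPolynomial.C (pdIter m b f 0 / m !) * ∏ j, MvPolynomial.X (b j), ?_, fun x => ?_⟩
  · refine MvPolynomial.totalDegree_finsetSum_le fun m hm =>
      MvPolynomial.totalDegree_finsetSum_le fun b _ => ?_
    refine (MvPolynomial.totalDegree_mul _ _).trans ?_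
    rw [MvPolynomial.totalDegree_C, zero_add]
    refine (MvPolynomial.totalDegree_finsetProd _ _).trans ?_
    simp only [MvPolynomial.totalDegree_X, Finset.sum_const, Finset.card_univ, Fintype.card_fin,
      smul_eq_mul, mul_one]
    exact Nat.lt_succ_iff.mp (Finset.mem_range.mp hm)
  · have hline : ∀ m t, iteratedDeriv m (fun s : ℝ => f (s • x)) t =
        ∑ b : Fin m → Fin n, (∏ j, x (b j)) * pdIter m b f (t • x) := fun m t => by
      rw [iteratedDeriv_eq_iterate, deriv_iterate_comp_smul hf, iterate_dirDeriv_eq_sum_pdIter hf]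
    have := eq_sum_iteratedDeriv_of_iteratedDeriv_eq_zero (h := fun s : ℝ => f (s • x))
      (hf.comp (contDiff_id.smul contDiff_const)) (N := ℓ) (fun t => by simp [hline, h]) 1
    simp only [one_smul, one_pow, mul_one, hline, zero_smul] at this
    rw [this, map_sum]
    refine Finset.sum_congr rfl fun m _ => ?_
    simp only [map_sum, MvPolynomial.eval_mul, MvPolynomial.eval_C, MvPolynomial.eval_prod,
      MvPolynomial.eval_X, Finset.sum_div]
    exact Finset.sum_congr rfl fun b _ => by ring

theorem stmt6_general {n ℓ : ℕ}
    (g ginv : Matrix (Fin n) (Fin n) ℝ) (hginv : g * ginv = 1)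
    (k : (Fin ℓ → Fin n) → (Fin n → ℝ) → ℝ) (hk : IsKillingTensor ginv ℓ k) :
    (∀ (b : Fin (ℓ + 1) → Fin n) (i : Fin ℓ → Fin n) (x : Fin n → ℝ),
      pdIter (ℓ + 1) b (k i) x = 0) ∧
    (∀ i : Fin ℓ → Fin n, ∃ p : MvPolynomial (Fin n) ℝ,
      p.totalDegree ≤ ℓ ∧ ∀ x, k i x = MvPolynomial.eval x p) :=
  ⟨hk.pdIter_eq_zero hginv, fun i =>
    exists_mvPolynomial_of_pdIter_eq_zero (hk.1 i) fun b => hk.pdIter_eq_zero hginv b i⟩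

/-- all partial derivatives of order `ℓ+1` of the components of a
Killing `ℓ`-tensor on `ℝⁿ` vanish identically; equivalently, each component is
(the evaluation of) a polynomial of total degree at most `ℓ`. -/
theorem stmt6 {n ℓ : ℕ} (hn : 0 < n)
    (g ginv : Matrix (Fin n) (Fin n) ℝ) (hgsym : g.IsSymm) (hginv : g * ginv = 1)
    (k : (Fin ℓ → Fin n) → (Fin n → ℝ) → ℝ) (hk : IsKillingTensor ginv ℓ k) :
    (∀ (b : Fin (ℓ + 1) → Fin n) (i : Fin ℓ → Fin n) (x : Fin n → ℝ),
      pdIter (ℓ + 1) b (k i) x = 0) ∧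
    (∀ i : Fin ℓ → Fin n, ∃ p : MvPolynomial (Fin n) ℝ,
      p.totalDegree ≤ ℓ ∧ ∀ x, k i x = MvPolynomial.eval x p) :=
  stmt6_general g ginv hginv k hk
end

section
/- Let k^{a₁…a_ℓ} be a Killing ℓ-tensor on ℝ^n. Then ∂^{(a₁}∂^{[c}k^{d]a₂…a_ℓ)} = 0; that is, the tensor field obtained from ∂^{a₁}∂^{c}k^{d a₂…a_ℓ} by antisymmetrizing over the indices c, d and then symmetrizing over the indices a₁,…,a_ℓ vanishes identically. -/
open Finset Equiv Nat

theorem Fin.exists_perm_comp_swap_zero_succ {α : Type*} {ℓ : ℕ} (x : Fin (ℓ + 1) → α)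
    (p : Fin (ℓ + 1)) :
    ∃ π : Perm (Fin ℓ), (fun j => x (swap 0 p j.succ)) = p.removeNth x ∘ π := by
  cases p using Fin.cases with
  | zero => exact ⟨1, by ext j; simp [Fin.tail]⟩
  | succ i => exact ⟨i.cycleRange, by ext j; simp [Fin.removeNth_apply]⟩

theorem sum_perm_eq_factorial_smul_sum_removeNth {α M : Type*} [AddCommMonoid M] {ℓ : ℕ}
    (F : α → (Fin ℓ → α) → M) (hF : ∀ a y (σ : Perm (Fin ℓ)), F a (y ∘ σ) = F a y)
    (x : Fin (ℓ + 1) → α) :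
    ∑ τ : Perm (Fin (ℓ + 1)), F (x (τ 0)) (fun j => x (τ j.succ)) =
      ℓ ! • ∑ p, F (x p) (p.removeNth x) := by
  rw [← Equiv.sum_comp Perm.decomposeFin.symm, Fintype.sum_prod_type, smul_sum]
  refine sum_congr rfl fun p _ => ?_
  obtain ⟨π, hπ⟩ := Fin.exists_perm_comp_swap_zero_succ x p
  calc ∑ σ : Perm (Fin ℓ), F (x (Perm.decomposeFin.symm (p, σ) 0))
          (fun j => x (Perm.decomposeFin.symm (p, σ) j.succ))
      = ∑ _σ : Perm (Fin ℓ), F (x p) (p.removeNth x) := by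
        refine sum_congr rfl fun σ _ => ?_
        simp only [Perm.decomposeFin_symm_apply_zero, Perm.decomposeFin_symm_apply_succ]
        rw [show (fun j => x (swap 0 p (σ j).succ)) = (fun j => x (swap 0 p j.succ)) ∘ σ from rfl,
          hF, hπ, hF]
    _ = ℓ ! • F (x p) (p.removeNth x) := by simp [Fintype.card_perm]

section Calculus

variable {n : ℕ} (ginv : Matrix (Fin n) (Fin n) ℝ)

theorem pdUp_eq_fderiv (a : Fin n) (f : (Fin n → ℝ) → ℝ) (x : Fin n → ℝ) :
    pdUp ginv a f x = fderiv ℝ f x (ginv a) := by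
  simp only [pdUp, pd, ← smul_eq_mul, ← map_smul, ← map_sum]
  congr 1
  ext b
  simp [Finset.sum_apply, Pi.single_apply]

theorem ContDiff.pdUp {k : WithTop ℕ∞} {f : (Fin n → ℝ) → ℝ} (hf : ContDiff ℝ (k + 1) f)
    (a : Fin n) : ContDiff ℝ k (pdUp ginv a f) := by
  simp only [funext (pdUp_eq_fderiv ginv a f)]
  exact (hf.fderiv_right le_rfl).clm_apply contDiff_const

theorem pdUp_pdUp_comm {f : (Fin n → ℝ) → ℝ} (hf : ContDiff ℝ 2 f) (a b : Fin n)
    (x : Fin n → ℝ) : pdUp ginv a (pdUp ginv b f) x = pdUp ginv b (pdUp ginv a f) x := by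
  have hdf : Differentiable ℝ (fderiv ℝ f) :=
    (hf.fderiv_right (by norm_num)).differentiable one_ne_zero
  have second : ∀ a b,
      pdUp ginv a (pdUp ginv b f) x = fderiv ℝ (fderiv ℝ f) x (ginv a) (ginv b) := by
    intro a b
    simp only [pdUp_eq_fderiv, funext (pdUp_eq_fderiv ginv b f)]
    rw [fderiv_clm_apply (hdf x) (differentiableAt_const _)]
    simp
  rw [second, second]
  exact hf.contDiffAt.isSymmSndFDerivAt (by simp [minSmoothness_of_isRCLikeNormedField]) _ _

theorem pdUp_sum {ι : Type*} (s : Finset ι) (f : ι → (Fin n → ℝ) → ℝ) (a : Fin n)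
    {x : Fin n → ℝ} (hf : ∀ i ∈ s, DifferentiableAt ℝ (f i) x) :
    pdUp ginv a (fun y => ∑ i ∈ s, f i y) x = ∑ i ∈ s, pdUp ginv a (f i) x := by
  simp only [pdUp_eq_fderiv, fderiv_fun_sum hf, FunLike.coe_sum, Finset.sum_apply]

end Calculus

namespace IsKillingTensor

variable {n ℓ : ℕ} {ginv : Matrix (Fin n) (Fin n) ℝ}

theorem contDiff_two {k : (Fin ℓ → Fin n) → (Fin n → ℝ) → ℝ} (hk : IsKillingTensor ginv ℓ k)
    (i : Fin ℓ → Fin n) : ContDiff ℝ 2 (k i) :=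
  (hk.1 i).of_le (ENat.natCast_le_of_coe_top_le_withTop le_rfl 2)

theorem cons_comp_perm {k : (Fin (ℓ + 1) → Fin n) → (Fin n → ℝ) → ℝ}
    (hk : IsKillingTensor ginv (ℓ + 1) k) (d : Fin n) (y : Fin ℓ → Fin n) (σ : Perm (Fin ℓ)) :
    k (Fin.cons d (y ∘ σ)) = k (Fin.cons d y) := by
  rw [← hk.2.1 (Perm.decomposeFin.symm (0, σ)) (Fin.cons d y)]
  congr 1
  ext j
  cases j using Fin.cases <;> simp

theorem sum_pdUp_removeNth {k : (Fin ℓ → Fin n) → (Fin n → ℝ) → ℝ}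
    (hk : IsKillingTensor ginv ℓ k) (i : Fin (ℓ + 1) → Fin n) (x : Fin n → ℝ) :
    ∑ p, pdUp ginv (i p) (k (p.removeNth i)) x = 0 := by
  have h := hk.2.2 i x
  rw [sum_perm_eq_factorial_smul_sum_removeNth (fun e y => pdUp ginv e (k y) x)
    (fun e y σ => by rw [hk.2.1]), nsmul_eq_mul] at h
  exact (mul_eq_zero.mp h).resolve_left (by exact_mod_cast factorial_ne_zero ℓ)

theorem sum_pdUp_pdUp_removeNth {k : (Fin ℓ → Fin n) → (Fin n → ℝ) → ℝ}
    (hk : IsKillingTensor ginv ℓ k) (c : Fin n) (i : Fin (ℓ + 1) → Fin n) (x : Fin n → ℝ) :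
    ∑ p, pdUp ginv c (pdUp ginv (i p) (k (p.removeNth i))) x = 0 := by
  have hzero : (fun y => ∑ p, pdUp ginv (i p) (k (p.removeNth i)) y) = fun _ => 0 :=
    funext (hk.sum_pdUp_removeNth i)
  rw [← pdUp_sum ginv _ _ _
    fun p _ => (((hk.contDiff_two _).pdUp ginv (i p)).differentiable one_ne_zero) x, hzero,
    pdUp_eq_fderiv]
  simp

theorem sum_pdUp_pdUp_cons_removeNth {k : (Fin (ℓ + 1) → Fin n) → (Fin n → ℝ) → ℝ}
    (hk : IsKillingTensor ginv (ℓ + 1) k) (c d : Fin n) (a : Fin (ℓ + 1) → Fin n)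
    (x : Fin n → ℝ) :
    ∑ q, pdUp ginv (a q) (pdUp ginv c (k (Fin.cons d (q.removeNth a)))) x =
      -pdUp ginv c (pdUp ginv d (k a)) x := by
  have h := hk.sum_pdUp_pdUp_removeNth c (Fin.cons d a) x
  have removeNth_succ_cons : ∀ q : Fin (ℓ + 1),
      q.succ.removeNth (Fin.cons d a : Fin (ℓ + 2) → Fin n) =
        (Fin.cons d (q.removeNth a) : Fin (ℓ + 1) → Fin n) :=
    Fin.cons_comp_succ_succAbove d a
  rw [Fin.sum_univ_succ] at h
  simp only [Fin.cons_zero, Fin.removeNth_zero, Fin.tail_cons, Fin.cons_succ,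
    removeNth_succ_cons] at h
  rw [eq_neg_iff_add_eq_zero, add_comm, ← h]
  congr 1
  refine sum_congr rfl fun q _ => ?_
  rw [pdUp_pdUp_comm ginv (hk.contDiff_two _)]

end IsKillingTensor

theorem stmt7_general {n m : ℕ}
    (ginv : Matrix (Fin n) (Fin n) ℝ)
    (k : (Fin (m + 1) → Fin n) → (Fin n → ℝ) → ℝ)
    (hk : IsKillingTensor ginv (m + 1) k) :
    ∀ (c d : Fin n) (a : Fin (m + 1) → Fin n) (x : Fin n → ℝ),
      (∑ σ : Equiv.Perm (Fin (m + 1)),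
        pdUp ginv (a (σ 0))
          (pdUp ginv c (k (Fin.cons d (fun j => a (σ j.succ))))) x) -
      (∑ σ : Equiv.Perm (Fin (m + 1)),
        pdUp ginv (a (σ 0))
          (pdUp ginv d (k (Fin.cons c (fun j => a (σ j.succ))))) x) = 0 := by
  intro c d a x
  have symmetrized : ∀ c d : Fin n,
      ∑ σ : Perm (Fin (m + 1)),
        pdUp ginv (a (σ 0)) (pdUp ginv c (k (Fin.cons d (fun j => a (σ j.succ))))) x =
      m ! • -pdUp ginv c (pdUp ginv d (k a)) x := fun c d => by
    rw [sum_perm_eq_factorial_smul_sum_removeNth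
      (fun e y => pdUp ginv e (pdUp ginv c (k (Fin.cons d y))) x)
      (fun e y σ => by simp only [hk.cons_comp_perm]), hk.sum_pdUp_pdUp_cons_removeNth]
  rw [symmetrized, symmetrized, pdUp_pdUp_comm ginv (hk.contDiff_two a), sub_self]

/-- for a Killing `ℓ`-tensor `k` (valence `ℓ = m + 1 ≥ 1`) on `ℝⁿ`,
`∂^{(a₁} ∂^{[c} k^{d] a₂ … a_ℓ)} = 0`: antisymmetrizing `∂^{a₁} ∂^{c} k^{d a₂ … a_ℓ}`
over `c, d` and symmetrizing over `a₁, …, a_ℓ` gives zero. -/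
theorem stmt7 {n m : ℕ} (hn : 0 < n)
    (g ginv : Matrix (Fin n) (Fin n) ℝ) (hgsym : g.IsSymm) (hginv : g * ginv = 1)
    (k : (Fin (m + 1) → Fin n) → (Fin n → ℝ) → ℝ)
    (hk : IsKillingTensor ginv (m + 1) k) :
    ∀ (c d : Fin n) (a : Fin (m + 1) → Fin n) (x : Fin n → ℝ),
      (∑ σ : Equiv.Perm (Fin (m + 1)),
        pdUp ginv (a (σ 0))
          (pdUp ginv c (k (Fin.cons d (fun j => a (σ j.succ))))) x) -
      (∑ σ : Equiv.Perm (Fin (m + 1)),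
        pdUp ginv (a (σ 0))
          (pdUp ginv d (k (Fin.cons c (fun j => a (σ j.succ))))) x) = 0 :=
  stmt7_general ginv k hk
end
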